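/- arXiv:math/0605732 — 7 statements merged into one kernel-verified Lean document; each statement's English description precedes it below -/
import Mathlib

section
/- If ψ₁ and ψ₂ are functions on (a,b) each of the form p ↦ ‖f‖_{L^p} for some measurable function f on a suitable measure space, then the pointwise product ψ₁·ψ₂ is also of this form, namely p ↦ ‖f₁·f₂‖_{L^p} where f₁, f₂ are independent random variables with ‖f₁‖_{L^p}=ψ₁(p), ‖f₂‖_{L^p}=ψ₂(p). -/
open MeasureTheory Set

/-- If `ψ₁ p = ‖f₁‖_{L^p}` and `ψ₂ p = ‖f₂‖_{L^p}`, then the pointwise product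
`ψ₁ * ψ₂` is again of this form, realized by the product `f₁ ⬝ f₂` of independent
copies on the product space. -/
theorem moment_class_mul {X₁ X₂ : Type*} [MeasurableSpace X₁] [MeasurableSpace X₂]
    (μ₁ : Measure X₁) (μ₂ : Measure X₂) [SFinite μ₁] [SFinite μ₂]
    (a b : ℝ) (ha : 1 ≤ a) (hab : a < b)
    (ψ₁ ψ₂ : ℝ → ℝ) (f₁ : X₁ → ℝ) (f₂ : X₂ → ℝ)
    (hf₁ : Measurable f₁) (hf₂ : Measurable f₂)
    (h₁ : ∀ p ∈ Set.Ioo a b, ψ₁ p = (∫ x, |f₁ x| ^ p ∂μ₁) ^ (1 / p))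
    (h₂ : ∀ p ∈ Set.Ioo a b, ψ₂ p = (∫ x, |f₂ x| ^ p ∂μ₂) ^ (1 / p)) :
    ∀ p ∈ Set.Ioo a b,
      ψ₁ p * ψ₂ p = (∫ z, |f₁ z.1 * f₂ z.2| ^ p ∂(μ₁.prod μ₂)) ^ (1 / p) := by
  intro p hp
  have key : ∫ z, |f₁ z.1 * f₂ z.2| ^ p ∂(μ₁.prod μ₂)
      = (∫ x, |f₁ x| ^ p ∂μ₁) * (∫ x, |f₂ x| ^ p ∂μ₂) := by
    rw [← integral_prod_mul (fun x => |f₁ x| ^ p) (fun x => |f₂ x| ^ p)]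
    congr 1
    ext z
    rw [abs_mul, Real.mul_rpow (abs_nonneg _) (abs_nonneg _)]
  rw [h₁ p hp, h₂ p hp, key,
    Real.mul_rpow (integral_nonneg fun x => Real.rpow_nonneg (abs_nonneg _) _)
      (integral_nonneg fun x => Real.rpow_nonneg (abs_nonneg _) _)]
end

section
/- The space G(ψ) of measurable functions f with finite norm ‖f‖_{G(ψ)} = sup_{p ∈ (a,b)} ‖f‖_{L^p}/ψ(p) is a Banach space: it is complete in this norm. -/
/-!
Fix `p₀ ∈ (a, b)`. Since `‖·‖_{L^{p₀}} ≤ ψ(p₀) ‖·‖_{G(ψ)}`, a `G(ψ)`-Cauchy sequence is Cauchy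
in `L^{p₀}`, so a subsequence `fs ∘ φ` converges a.e. to some `f`. Fatou's lemma in each `L^p`,
applied to `fs m - fs (φ k) → fs m - f`, turns the Cauchy bound `‖fs m - fs n‖_{G(ψ)} ≤ ε`
into `‖fs m - f‖_{G(ψ)} ≤ ε`; finiteness of `‖f‖_{G(ψ)}` then follows from the triangle
inequality.
-/

open MeasureTheory Set Filter

/-- The moment norm `‖f‖_{G(ψ)} = sup_{p ∈ (a,b)} ‖f‖_{L^p} / ψ(p)`. -/
noncomputable def GNorm {X : Type*} [MeasurableSpace X] (μ : Measure X)
    (a b : ℝ) (ψ : ℝ → ℝ) (f : X → ℝ) : ENNReal :=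
  ⨆ p : Set.Ioo a b, eLpNorm f (ENNReal.ofReal (p : ℝ)) μ / ENNReal.ofReal (ψ p)

open scoped ENNReal Topology

theorem MeasureTheory.exists_subseq_ae_tendsto_of_cauchy_eLpNorm {α E : Type*}
    [MeasurableSpace α] {μ : Measure α} [NormedAddCommGroup E] [CompleteSpace E]
    {p : ℝ≥0∞} [Fact (1 ≤ p)]
    {f : ℕ → α → E} (hf : ∀ n, MemLp (f n) p μ)
    (hcauchy : ∀ ε > 0, ∃ N, ∀ n ≥ N, eLpNorm (f n - f N) p μ < ε) :
    ∃ g : α → E, AEStronglyMeasurable g μ ∧ ∃ φ : ℕ → ℕ, StrictMono φ ∧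
      ∀ᵐ x ∂μ, Tendsto (fun k => f (φ k) x) atTop (𝓝 (g x)) := by
  set F : ℕ → Lp E p μ := fun n => (hf n).toLp (f n)
  have hF : CauchySeq F := EMetric.cauchySeq_iff'.mpr fun ε hε => by
    simpa only [F, Lp.edist_toLp_toLp] using hcauchy ε hε
  obtain ⟨G, hFG⟩ := cauchySeq_tendsto_of_complete hF
  obtain ⟨φ, hφ, hae⟩ := (tendstoInMeasure_of_tendsto_Lp hFG).exists_seq_tendsto_ae
  have hFf : ∀ᵐ x ∂μ, ∀ n, F n x = f n x := ae_all_iff.mpr fun n => (hf n).coeFn_toLp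
  refine ⟨G, Lp.aestronglyMeasurable G, φ, hφ, ?_⟩
  filter_upwards [hae, hFf] with x hx hxf
  simpa only [hxf] using hx

section GNorm

variable {X : Type*} [MeasurableSpace X] {μ : Measure X} {a b : ℝ} {ψ : ℝ → ℝ}

theorem eLpNorm_div_le_GNorm (f : X → ℝ) {p : ℝ} (hp : p ∈ Ioo a b) :
    eLpNorm f (ENNReal.ofReal p) μ / ENNReal.ofReal (ψ p) ≤ GNorm μ a b ψ f :=
  le_iSup (fun q : Ioo a b => eLpNorm f (ENNReal.ofReal q) μ / ENNReal.ofReal (ψ q)) ⟨p, hp⟩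

theorem eLpNorm_le_GNorm_mul (f : X → ℝ) {p : ℝ} (hp : p ∈ Ioo a b) (hψp : 0 < ψ p) :
    eLpNorm f (ENNReal.ofReal p) μ ≤ GNorm μ a b ψ f * ENNReal.ofReal (ψ p) :=
  (ENNReal.div_le_iff (ENNReal.ofReal_pos.mpr hψp).ne' ENNReal.ofReal_ne_top).mp
    (eLpNorm_div_le_GNorm f hp)

theorem GNorm_le_of_eLpNorm_le {f : X → ℝ} {C : ℝ≥0∞}
    (h : ∀ p ∈ Ioo a b, eLpNorm f (ENNReal.ofReal p) μ ≤ C * ENNReal.ofReal (ψ p)) :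
    GNorm μ a b ψ f ≤ C :=
  iSup_le fun p => ENNReal.div_le_of_le_mul (h p p.2)

theorem memLp_of_GNorm_lt_top {f : X → ℝ} (hf : AEStronglyMeasurable f μ)
    (hfin : GNorm μ a b ψ f < ⊤) {p : ℝ} (hp : p ∈ Ioo a b) (hψp : 0 < ψ p) :
    MemLp f (ENNReal.ofReal p) μ :=
  ⟨hf, (eLpNorm_le_GNorm_mul f hp hψp).trans_lt (ENNReal.mul_lt_top hfin ENNReal.ofReal_lt_top)⟩

theorem GNorm_sub_le (ha : 1 ≤ a) {f g : X → ℝ} (hf : AEStronglyMeasurable f μ)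
    (hg : AEStronglyMeasurable g μ) :
    GNorm μ a b ψ (f - g) ≤ GNorm μ a b ψ f + GNorm μ a b ψ g := by
  refine iSup_le fun ⟨p, hp⟩ => ?_
  have h1p : 1 ≤ ENNReal.ofReal p := ENNReal.one_le_ofReal.mpr (ha.trans hp.1.le)
  calc eLpNorm (f - g) (ENNReal.ofReal p) μ / ENNReal.ofReal (ψ p)
      ≤ (eLpNorm f (ENNReal.ofReal p) μ + eLpNorm g (ENNReal.ofReal p) μ)
          / ENNReal.ofReal (ψ p) := by gcongr; exact eLpNorm_sub_le hf hg h1p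
    _ = eLpNorm f (ENNReal.ofReal p) μ / ENNReal.ofReal (ψ p)
          + eLpNorm g (ENNReal.ofReal p) μ / ENNReal.ofReal (ψ p) := ENNReal.add_div
    _ ≤ GNorm μ a b ψ f + GNorm μ a b ψ g :=
      add_le_add (eLpNorm_div_le_GNorm f hp) (eLpNorm_div_le_GNorm g hp)

theorem GNorm_le_of_ae_tendsto (hψ : ∀ p ∈ Ioo a b, 0 < ψ p) {g : ℕ → X → ℝ} {g_lim : X → ℝ}
    (hg : ∀ k, AEStronglyMeasurable (g k) μ)
    (hlim : ∀ᵐ x ∂μ, Tendsto (fun k => g k x) atTop (𝓝 (g_lim x))) {C : ℝ≥0∞}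
    (hC : ∀ᶠ k in atTop, GNorm μ a b ψ (g k) ≤ C) :
    GNorm μ a b ψ g_lim ≤ C := by
  refine GNorm_le_of_eLpNorm_le fun p hp => ?_
  calc eLpNorm g_lim (ENNReal.ofReal p) μ
      ≤ atTop.liminf fun k => eLpNorm (g k) (ENNReal.ofReal p) μ :=
        Lp.eLpNorm_lim_le_liminf_eLpNorm hg g_lim hlim
    _ ≤ C * ENNReal.ofReal (ψ p) := by
        refine liminf_le_of_frequently_le' (hC.mono fun k hk => ?_).frequently
        exact (eLpNorm_le_GNorm_mul (g k) hp (hψ p hp)).trans (by gcongr)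

theorem cauchy_eLpNorm_of_cauchy_GNorm {fs : ℕ → X → ℝ}
    (hcauchy : ∀ ε : ℝ≥0∞, 0 < ε → ∃ N : ℕ, ∀ m ≥ N, ∀ n ≥ N,
      GNorm μ a b ψ (fs n - fs m) ≤ ε) {p : ℝ} (hp : p ∈ Ioo a b) (hψp : 0 < ψ p) :
    ∀ ε > 0, ∃ N, ∀ n ≥ N, eLpNorm (fs n - fs N) (ENNReal.ofReal p) μ < ε := by
  intro ε hε
  obtain ⟨δ, hδ, hδε⟩ := ENNReal.exists_pos_mul_lt (b := ε) ENNReal.ofReal_ne_top hε.ne'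
  obtain ⟨N, hN⟩ := hcauchy δ hδ
  refine ⟨N, fun n hn => ?_⟩
  calc eLpNorm (fs n - fs N) (ENNReal.ofReal p) μ
      ≤ GNorm μ a b ψ (fs n - fs N) * ENNReal.ofReal (ψ p) := eLpNorm_le_GNorm_mul _ hp hψp
    _ ≤ δ * ENNReal.ofReal (ψ p) := by gcongr; exact hN N le_rfl n hn
    _ < ε := hδε

theorem tendsto_GNorm_sub_of_ae_tendsto_subseq (hψ : ∀ p ∈ Ioo a b, 0 < ψ p)
    {fs : ℕ → X → ℝ} (hmeas : ∀ n, AEStronglyMeasurable (fs n) μ)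
    (hcauchy : ∀ ε : ℝ≥0∞, 0 < ε → ∃ N : ℕ, ∀ m ≥ N, ∀ n ≥ N,
      GNorm μ a b ψ (fs n - fs m) ≤ ε)
    {f : X → ℝ} {φ : ℕ → ℕ} (hφ : StrictMono φ)
    (hae : ∀ᵐ x ∂μ, Tendsto (fun k => fs (φ k) x) atTop (𝓝 (f x))) :
    Tendsto (fun n => GNorm μ a b ψ (fs n - f)) atTop (𝓝 0) := by
  refine ENNReal.tendsto_nhds_zero.mpr fun ε hε => ?_
  obtain ⟨N, hN⟩ := hcauchy ε hε
  refine eventually_atTop.mpr ⟨N, fun m hm => ?_⟩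
  refine GNorm_le_of_ae_tendsto hψ (fun k => (hmeas m).sub (hmeas (φ k)))
    (hae.mono fun x hx => tendsto_const_nhds.sub hx) ?_
  filter_upwards [hφ.tendsto_atTop.eventually_ge_atTop N] with k hk
  exact hN (φ k) hk m hm

end GNorm

theorem GNorm_complete_general {X : Type*} [MeasurableSpace X] (μ : Measure X)
    (a b : ℝ) (ha : 1 ≤ a) (hab : a < b)
    (ψ : ℝ → ℝ)
    (hψ : ∀ p ∈ Set.Ioo a b, 0 < ψ p)
    (fs : ℕ → X → ℝ) (hmeas : ∀ n, AEStronglyMeasurable (fs n) μ)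
    (hfin : ∀ n, GNorm μ a b ψ (fs n) < ⊤)
    (hcauchy : ∀ ε : ENNReal, 0 < ε → ∃ N : ℕ, ∀ m ≥ N, ∀ n ≥ N,
      GNorm μ a b ψ (fs n - fs m) ≤ ε) :
    ∃ f : X → ℝ, AEStronglyMeasurable f μ ∧ GNorm μ a b ψ f < ⊤ ∧
      Tendsto (fun n => GNorm μ a b ψ (fs n - f)) atTop (nhds 0) := by
  obtain ⟨p, hp⟩ := nonempty_Ioo.mpr hab
  have : Fact (1 ≤ ENNReal.ofReal p) := ⟨ENNReal.one_le_ofReal.mpr (ha.trans hp.1.le)⟩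
  obtain ⟨f, hf, φ, hφ, hae⟩ := exists_subseq_ae_tendsto_of_cauchy_eLpNorm
    (fun n => memLp_of_GNorm_lt_top (hmeas n) (hfin n) hp (hψ p hp))
    (cauchy_eLpNorm_of_cauchy_GNorm hcauchy hp (hψ p hp))
  have hlim := tendsto_GNorm_sub_of_ae_tendsto_subseq hψ hmeas hcauchy hφ hae
  refine ⟨f, hf, ?_, hlim⟩
  obtain ⟨N, hN⟩ := eventually_atTop.mp ((ENNReal.tendsto_nhds_zero.mp hlim) 1 one_pos)
  calc GNorm μ a b ψ f = GNorm μ a b ψ (fs N - (fs N - f)) := by rw [sub_sub_cancel]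
    _ ≤ GNorm μ a b ψ (fs N) + GNorm μ a b ψ (fs N - f) :=
      GNorm_sub_le ha (hmeas N) ((hmeas N).sub hf)
    _ < ⊤ := ENNReal.add_lt_top.mpr ⟨hfin N, (hN N le_rfl).trans_lt ENNReal.one_lt_top⟩

/-- The space `G(ψ)` is complete: every Cauchy sequence for the `G(ψ)` norm
converges in the `G(ψ)` norm to some element of `G(ψ)`. -/
theorem GNorm_complete {X : Type*} [MeasurableSpace X] (μ : Measure X)
    [SigmaFinite μ] (a b : ℝ) (ha : 1 ≤ a) (hab : a < b)
    (ψ : ℝ → ℝ) (hψc : ContinuousOn ψ (Set.Ioo a b))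
    (hψ : ∀ p ∈ Set.Ioo a b, 0 < ψ p)
    (fs : ℕ → X → ℝ) (hmeas : ∀ n, AEStronglyMeasurable (fs n) μ)
    (hfin : ∀ n, GNorm μ a b ψ (fs n) < ⊤)
    (hcauchy : ∀ ε : ENNReal, 0 < ε → ∃ N : ℕ, ∀ m ≥ N, ∀ n ≥ N,
      GNorm μ a b ψ (fs n - fs m) ≤ ε) :
    ∃ f : X → ℝ, AEStronglyMeasurable f μ ∧ GNorm μ a b ψ f < ⊤ ∧
      Tendsto (fun n => GNorm μ a b ψ (fs n - f)) atTop (nhds 0) :=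
  GNorm_complete_general μ a b ha hab ψ hψ fs hmeas hfin hcauchy
end

section
/- Let ψ(p) = (p-a)^{-α} near a and (b-p)^{-β} near b with min(α,β) > 0 and b < ∞; then as δ → 0+, the fundamental function satisfies φ(G(a,b;α,β), δ) ∼ (βb²/e)^β · δ^{1/b} · |log δ|^{-β}. -/
/-!
Write `δ = e^{-L}`, so that `δ^{1/p} ζ(p) = e^{-L/p} ζ(p)` and `L → ∞`. On the branch
`ζ(p) = (b - p)^β` the tangent line `1/p ≥ 1/b + (b - p)/b²` of `1/p` at `b` and
`β log t - c t ≤ β log (β/c) - β` bound `e^{-L/p} (b - p)^β` by exactly the claimed main term,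
and the choice `b - p = βb²/L` attains it up to the factor `e^{β(1 - b/p)} → 1`.
The branch `p < h` contributes at most `(b - a)^α e^{-L/h}`, which is exponentially smaller
than `e^{-L/b}`.
-/

open Set Filter Real Topology

/-- The claimed asymptotics of `φ(e^{-L})`, in the variable `L = |log δ|`. -/
noncomputable def asymptoticProfile (b β L : ℝ) : ℝ :=
  (β * b ^ 2 / exp 1) ^ β * exp (-L / b) * L ^ (-β)

lemma one_div_add_sub_div_sq_le_one_div {p b : ℝ} (hp : 0 < p) (hb : 0 < b) :
    1 / b + (b - p) / b ^ 2 ≤ 1 / p := by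
  have hgap : 1 / p - (1 / b + (b - p) / b ^ 2) = (b - p) ^ 2 / (p * b ^ 2) := by
    field_simp
    ring
  have : 0 ≤ (b - p) ^ 2 / (p * b ^ 2) := by positivity
  linarith

lemma mul_log_sub_mul_le {β c t : ℝ} (hβ : 0 < β) (hc : 0 < c) (ht : 0 < t) :
    β * log t - c * t ≤ β * log (β / c) - β := by
  have hlog := log_le_sub_one_of_pos (show 0 < c * t / β by positivity)
  rw [log_div (by positivity) hβ.ne', log_mul hc.ne' ht.ne'] at hlog
  rw [log_div hβ.ne' hc.ne']
  have hcancel : β * (c * t / β) = c * t := by field_simp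
  linear_combination β * hlog + hcancel

section Profile

variable {b β L : ℝ}

lemma asymptoticProfile_eq_exp (hb : 0 < b) (hβ : 0 < β) (hL : 0 < L) :
    asymptoticProfile b β L = exp (β * log (β * b ^ 2 / L) - β - L / b) := by
  rw [asymptoticProfile, rpow_def_of_pos (by positivity), rpow_def_of_pos hL, ← exp_add,
    ← exp_add, log_div (by positivity) hL.ne', log_div (by positivity) (exp_pos 1).ne', log_exp]
  ring_nf

lemma asymptoticProfile_pos (hb : 0 < b) (hβ : 0 < β) (hL : 0 < L) :
    0 < asymptoticProfile b β L :=
  asymptoticProfile_eq_exp hb hβ hL ▸ exp_pos _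

lemma asymptoticProfile_neg_log {δ : ℝ} (hδ0 : 0 < δ) (hδ1 : δ < 1) :
    asymptoticProfile b β (-log δ) = (β * b ^ 2 / exp 1) ^ β * δ ^ (1 / b) * |log δ| ^ (-β) := by
  rw [asymptoticProfile, abs_of_neg (log_neg hδ0 hδ1), rpow_def_of_pos hδ0, neg_neg,
    mul_one_div]

lemma exp_neg_div_mul_rpow_le_asymptoticProfile (hb : 0 < b) (hβ : 0 < β) (hL : 0 < L)
    {p : ℝ} (hp : 0 < p) (hpb : p < b) :
    exp (-L / p) * (b - p) ^ β ≤ asymptoticProfile b β L := by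
  have htangent := mul_le_mul_of_nonneg_left (one_div_add_sub_div_sq_le_one_div hp hb) hL.le
  have hlog := mul_log_sub_mul_le hβ (show 0 < L / b ^ 2 by positivity) (sub_pos.2 hpb)
  rw [div_div_eq_mul_div] at hlog
  rw [asymptoticProfile_eq_exp hb hβ hL, rpow_def_of_pos (sub_pos.2 hpb), ← exp_add, exp_le_exp]
  linear_combination htangent + hlog

lemma exp_neg_div_mul_rpow_eq_of_mul_sub_eq (hb : 0 < b) (hβ : 0 < β) (hL : 0 < L)
    {p : ℝ} (hp : p ≠ 0) (hpL : L * (b - p) = β * b ^ 2) :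
    exp (-L / p) * (b - p) ^ β = exp (β * (1 - b / p)) * asymptoticProfile b β L := by
  have hbp : b - p = β * b ^ 2 / L := by
    field_simp
    linarith
  rw [asymptoticProfile_eq_exp hb hβ hL, hbp, rpow_def_of_pos (by positivity), ← exp_add,
    ← exp_add, exp_eq_exp]
  have hexp : -L / p = -(β * b) / p - L / b := by
    field_simp
    linear_combination -hpL
  rw [hexp]
  ring

lemma tendsto_exp_neg_div_div_asymptoticProfile (hβ : 0 < β) {h : ℝ} (hh : 0 < h)
    (hhb : h < b) :
    Tendsto (fun L => exp (-L / h) / asymptoticProfile b β L) atTop (𝓝 0) := by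
  have hb : 0 < b := hh.trans hhb
  have hc : 0 < 1 / h - 1 / b := sub_pos.2 (one_div_lt_one_div_of_lt hh hhb)
  have hlim := (tendsto_rpow_mul_exp_neg_mul_atTop_nhds_zero β _ hc).const_mul
    ((β * b ^ 2 / exp 1) ^ β)⁻¹
  rw [mul_zero] at hlim
  refine hlim.congr' ?_
  filter_upwards [eventually_gt_atTop 0] with L hL
  have hsplit : exp (-L / h) = exp (-(1 / h - 1 / b) * L) * exp (-L / b) := by
    rw [← exp_add]
    ring_nf
  rw [asymptoticProfile, hsplit, rpow_neg hL.le]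
  field_simp

end Profile

section IsLUB

variable {a b β h L M s : ℝ} {ζ : ℝ → ℝ}

lemma le_max_asymptoticProfile_of_isLUB (hβ : 0 < β) (ha : 0 ≤ a) (hL : 0 < L)
    (hM : 0 ≤ M) (hζ_left : ∀ p ∈ Ioo a h, ζ p ≤ M)
    (hζ_right : ∀ p ∈ Ico h b, ζ p = (b - p) ^ β)
    (hs : IsLUB {y | ∃ p ∈ Ioo a b, y = exp (-L / p) * ζ p} s) :
    s ≤ max (exp (-L / h) * M) (asymptoticProfile b β L) := by
  refine hs.2 ?_
  rintro _ ⟨p, hp, rfl⟩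
  have hp0 : 0 < p := ha.trans_lt hp.1
  rcases lt_or_ge p h with hph | hph
  · refine le_max_of_le_left ?_
    calc exp (-L / p) * ζ p ≤ exp (-L / p) * M :=
          mul_le_mul_of_nonneg_left (hζ_left p ⟨hp.1, hph⟩) (exp_pos _).le
      _ ≤ exp (-L / h) * M := by
          refine mul_le_mul_of_nonneg_right (exp_le_exp.2 ?_) hM
          rw [neg_div, neg_div, neg_le_neg_iff]
          exact div_le_div_of_nonneg_left hL.le hp0 hph.le
  · rw [hζ_right p ⟨hph, hp.2⟩]
    exact le_max_of_le_right
      (exp_neg_div_mul_rpow_le_asymptoticProfile (hp0.trans hp.2) hβ hL hp0 hp.2)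

lemma exp_mul_asymptoticProfile_le_of_isLUB (hβ : 0 < β) (ha : 0 ≤ a) (hah : a < h)
    (hhb : h < b) (hL : β * b ^ 2 / (b - h) < L)
    (hζ_right : ∀ p ∈ Ico h b, ζ p = (b - p) ^ β)
    (hs : IsLUB {y | ∃ p ∈ Ioo a b, y = exp (-L / p) * ζ p} s) :
    exp (β * (1 - b / (b - β * b ^ 2 / L))) * asymptoticProfile b β L ≤ s := by
  have hb : 0 < b := (ha.trans_lt hah).trans hhb
  have hbh : 0 < b - h := sub_pos.2 hhb
  have hL0 : 0 < L := lt_of_le_of_lt (by positivity) hL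
  have hstep : β * b ^ 2 / L < b - h := by
    rw [div_lt_iff₀ hL0]
    rw [div_lt_iff₀ hbh] at hL
    linarith
  have hstep0 : 0 < β * b ^ 2 / L := by positivity
  set p := b - β * b ^ 2 / L with hp
  have hhp : h < p := by linarith
  have hpL : L * (b - p) = β * b ^ 2 := by
    rw [hp, sub_sub_cancel, mul_div_cancel₀ _ hL0.ne']
  rw [← exp_neg_div_mul_rpow_eq_of_mul_sub_eq hb hβ hL0 (by linarith) hpL,
    ← hζ_right p ⟨hhp.le, by linarith⟩]
  exact hs.1 ⟨p, ⟨hah.trans hhp, by linarith⟩, rfl⟩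

theorem tendsto_div_asymptoticProfile_of_isLUB {ψ : ℝ → ℝ} (hβ : 0 < β) (ha : 0 ≤ a)
    (hah : a < h) (hhb : h < b) (hM : 0 ≤ M) (hζ_left : ∀ p ∈ Ioo a h, ζ p ≤ M)
    (hζ_right : ∀ p ∈ Ico h b, ζ p = (b - p) ^ β)
    (hψ : ∀ L, IsLUB {y | ∃ p ∈ Ioo a b, y = exp (-L / p) * ζ p} (ψ L)) :
    Tendsto (fun L => ψ L / asymptoticProfile b β L) atTop (𝓝 1) := by
  have hh : 0 < h := ha.trans_lt hah
  have hb : 0 < b := hh.trans hhb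
  have hlower : Tendsto (fun L => exp (β * (1 - b / (b - β * b ^ 2 / L)))) atTop (𝓝 1) := by
    have hcont : ContinuousAt (fun t => exp (β * (1 - b / (b - t)))) 0 := by
      fun_prop (disch := simp [hb.ne'])
    simpa [Function.comp_def, hb.ne'] using hcont.tendsto.comp (tendsto_const_nhds.div_atTop tendsto_id)
  have hupper : Tendsto (fun L => max (exp (-L / h) * M / asymptoticProfile b β L) 1)
      atTop (𝓝 1) := by
    simp_rw [mul_div_right_comm]
    simpa using ((tendsto_exp_neg_div_div_asymptoticProfile hβ hh hhb).mul_const M).max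
      (tendsto_const_nhds (x := (1 : ℝ)))
  refine tendsto_of_tendsto_of_tendsto_of_le_of_le' hlower hupper ?_ ?_
  · filter_upwards [eventually_gt_atTop (β * b ^ 2 / (b - h)), eventually_gt_atTop 0]
      with L hL hL0
    rw [le_div_iff₀ (asymptoticProfile_pos hb hβ hL0)]
    exact exp_mul_asymptoticProfile_le_of_isLUB hβ ha hah hhb hL hζ_right (hψ L)
  · filter_upwards [eventually_gt_atTop 0] with L hL
    have hP := asymptoticProfile_pos hb hβ hL
    rw [div_le_iff₀ hP, max_mul_of_nonneg _ _ hP.le, one_mul, div_mul_cancel₀ _ hP.ne']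
    exact le_max_asymptoticProfile_of_isLUB hβ ha hL hM hζ_left hζ_right (hψ L)

end IsLUB

theorem fundamental_function_asymptotics_general (a b α β : ℝ) (ha : 1 ≤ a)
    (hα : 0 < α) (hβ : 0 < β)
    (h : ℝ) (hh : h ∈ Set.Ioo a b)
    (ζ : ℝ → ℝ) (hζ : ∀ p, ζ p = if p < h then (p - a) ^ α else (b - p) ^ β)
    (φ : ℝ → ℝ)
    (hφ : ∀ δ > (0 : ℝ),
      IsLUB {y | ∃ p ∈ Set.Ioo a b, y = δ ^ (1 / p) * ζ p} (φ δ)) :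
    Tendsto
      (fun δ : ℝ =>
        φ δ / ((β * b ^ 2 / Real.exp 1) ^ β * δ ^ (1 / b) * |Real.log δ| ^ (-β)))
      (nhdsWithin 0 (Set.Ioi 0)) (nhds 1) := by
  have hψ : ∀ L, IsLUB {y | ∃ p ∈ Ioo a b, y = exp (-L / p) * ζ p} (φ (exp (-L))) := by
    intro L
    simpa only [← exp_mul, mul_one_div] using hφ _ (exp_pos (-L))
  have hζ_left : ∀ p ∈ Ioo a h, ζ p ≤ (b - a) ^ α := fun p hp => by
    rw [hζ, if_pos hp.2]
    exact rpow_le_rpow (sub_pos.2 hp.1).le (by linarith [hp.2, hh.2]) hα.le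
  have hζ_right : ∀ p ∈ Ico h b, ζ p = (b - p) ^ β := fun p hp => by
    rw [hζ, if_neg (not_lt.2 hp.1)]
  have hlim := tendsto_div_asymptoticProfile_of_isLUB hβ (by linarith) hh.1 hh.2
    (rpow_nonneg (by linarith [hh.1, hh.2]) α) hζ_left hζ_right hψ
  refine (hlim.comp (tendsto_neg_atBot_atTop.comp tendsto_log_nhdsGT_zero)).congr' ?_
  filter_upwards [Ioo_mem_nhdsGT one_pos] with δ hδ
  simp only [Function.comp_apply, neg_neg, exp_log hδ.1, asymptoticProfile_neg_log hδ.1 hδ.2]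

/-- Asymptotics of the fundamental function of `G(a,b;α,β)` as `δ → 0+`:
`φ(δ) ∼ (β b²/e)^β δ^{1/b} |log δ|^{-β}`. -/
theorem fundamental_function_asymptotics (a b α β : ℝ) (ha : 1 ≤ a) (hab : a < b)
    (hα : 0 < α) (hβ : 0 < β)
    (h : ℝ) (hh : h ∈ Set.Ioo a b) (hroot : (h - a) ^ α = (b - h) ^ β)
    (ζ : ℝ → ℝ) (hζ : ∀ p, ζ p = if p < h then (p - a) ^ α else (b - p) ^ β)
    (φ : ℝ → ℝ)
    (hφ : ∀ δ > (0 : ℝ),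
      IsLUB {y | ∃ p ∈ Set.Ioo a b, y = δ ^ (1 / p) * ζ p} (φ δ)) :
    Tendsto
      (fun δ : ℝ =>
        φ δ / ((β * b ^ 2 / Real.exp 1) ^ β * δ ^ (1 / b) * |Real.log δ| ^ (-β)))
      (nhdsWithin 0 (Set.Ioi 0)) (nhds 1) :=
  fundamental_function_asymptotics_general a b α β ha hα hβ h hh ζ hζ φ hφ
end

section
/- If g defines a bounded linear functional l_g(f) = ∫ f·g dμ on G(ψ), then there is K < ∞ such that for all z > 0, ∫_z^∞ μ{|g| > u} du ≤ K·φ(G(ψ), μ{|g| > z}), where φ is the fundamental function of G(ψ). -/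
open MeasureTheory Set Filter

/-- The fundamental function `φ(δ) = sup_{p ∈ (a,b)} δ^{1/p}/ψ(p)`. -/
noncomputable def PhiG (a b : ℝ) (ψ : ℝ → ℝ) (δ : ENNReal) : ENNReal :=
  ⨆ p : Set.Ioo a b, δ ^ (1 / (p : ℝ)) / ENNReal.ofReal (ψ p)

/-!
Test the functional on `f = 1_{|g| > z} · g / |g|`. Its `L^p` norms are those of the
indicator of `A = {|g| > z}`, so `‖f‖_{G(ψ)} = φ(μ A)`, while `∫ f g = ∫_A |g|`, which by the
layer cake formula dominates `∫_z^∞ T(g,u) du`.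
-/

lemma setLIntegral_Ioi_measure_lt_le {X : Type*} [MeasurableSpace X] (μ : Measure X)
    {F : X → ℝ} (hF : Measurable F) {z : ℝ} (hz : 0 ≤ z) :
    ∫⁻ u in Ioi z, μ {x | u < F x} ≤
      ∫⁻ x in {x | z < F x}, ENNReal.ofReal (F x) ∂μ := by
  set A := {x | z < F x}
  have hA : MeasurableSet A := measurableSet_lt measurable_const hF
  have hF_nonneg : 0 ≤ᵐ[μ.restrict A] F :=
    ae_restrict_of_forall_mem hA fun x hx => hz.trans (le_of_lt hx)
  calc ∫⁻ u in Ioi z, μ {x | u < F x}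
      = ∫⁻ u in Ioi z, μ.restrict A {x | u < F x} :=
        setLIntegral_congr_fun measurableSet_Ioi fun u hu =>
          (Measure.restrict_eq_self μ
            (show {x | u < F x} ⊆ A from fun _ hx => (mem_Ioi.mp hu).trans hx)).symm
    _ ≤ ∫⁻ u in Ioi 0, μ.restrict A {x | u < F x} := lintegral_mono_set (Ioi_subset_Ioi hz)
    _ = ∫⁻ x in A, ENNReal.ofReal (F x) ∂μ :=
        (lintegral_eq_lintegral_meas_lt _ hF_nonneg hF.aemeasurable).symm

lemma GNorm_indicator_of_norm_eq_one {X : Type*} [MeasurableSpace X] (μ : Measure X)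
    {a : ℝ} (ha : 0 ≤ a) (b : ℝ) (ψ : ℝ → ℝ) {A : Set X} (hA : MeasurableSet A)
    {u : X → ℝ} (hu : ∀ x ∈ A, ‖u x‖ = 1) :
    GNorm μ a b ψ (A.indicator u) = PhiG a b ψ (μ A) := by
  refine iSup_congr fun p => ?_
  have hp : 0 < (p : ℝ) := ha.trans_lt p.2.1
  have hnorm (x : X) : ‖A.indicator u x‖ = ‖A.indicator (fun _ => (1 : ℝ)) x‖ := by
    by_cases hx : x ∈ A <;> simp [hx, hu]
  rw [eLpNorm_congr_norm_ae (Eventually.of_forall hnorm),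
    eLpNorm_indicator_const hA (by simpa using hp) ENNReal.ofReal_ne_top]
  simp [ENNReal.toReal_ofReal hp.le]

lemma div_abs_mul_self (r : ℝ) : r / |r| * r = |r| := by
  rw [div_mul_eq_mul_div, ← abs_mul_abs_self, mul_self_div_self]

theorem dual_tail_condition_general {X : Type*} [MeasurableSpace X] (μ : Measure X)
    (a b : ℝ) (ha : 1 ≤ a)
    (ψ : ℝ → ℝ)
    (g : X → ℝ) (hg : Measurable g)
    (hbound : ∃ K : ENNReal, K < ⊤ ∧ ∀ f : X → ℝ, Measurable f →
      GNorm μ a b ψ f < ⊤ → Integrable (fun x => f x * g x) μ ∧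
      ENNReal.ofReal |∫ x, f x * g x ∂μ| ≤ K * GNorm μ a b ψ f) :
    ∃ K : ENNReal, K < ⊤ ∧ ∀ z : ℝ, 0 < z →
      (∫⁻ u in Set.Ioi z, μ {x | u < |g x|}) ≤
        K * PhiG a b ψ (μ {x | z < |g x|}) := by
  obtain ⟨K, hK, hb⟩ := hbound
  -- `K + 1` rather than `K`, so that the bound is `⊤` when `φ = ⊤` even if `K = 0`.
  refine ⟨K + 1, ENNReal.add_lt_top.mpr ⟨hK, ENNReal.one_lt_top⟩, fun z hz => ?_⟩
  set A := {x | z < |g x|}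
  have hA : MeasurableSet A := measurableSet_lt measurable_const hg.abs
  obtain hphi | hphi := eq_or_ne (PhiG a b ψ (μ A)) ⊤
  · simp [hphi]
  set f := A.indicator fun x => g x / |g x|
  have hGf : GNorm μ a b ψ f = PhiG a b ψ (μ A) :=
    GNorm_indicator_of_norm_eq_one μ (zero_le_one.trans ha) b ψ hA fun x hx => by
      have hgx : g x ≠ 0 := abs_pos.mp (hz.trans hx)
      simp [norm_div, hgx]
  have hfg : (fun x => f x * g x) = A.indicator fun x => |g x| := funext fun x => by
    by_cases hx : x ∈ A <;> simp [f, hx, div_abs_mul_self]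
  obtain ⟨hint, hle⟩ := hb f ((hg.div hg.abs).indicator hA) (hGf ▸ hphi.lt_top)
  rw [hfg, integrable_indicator_iff hA] at hint
  calc ∫⁻ u in Ioi z, μ {x | u < |g x|}
      ≤ ∫⁻ x in A, ENNReal.ofReal |g x| ∂μ :=
        setLIntegral_Ioi_measure_lt_le μ hg.abs hz.le
    _ = ENNReal.ofReal |∫ x, f x * g x ∂μ| := by
        rw [← ofReal_integral_eq_lintegral_ofReal hint (ae_of_all _ fun x => abs_nonneg _),
          hfg, integral_indicator hA,
          abs_of_nonneg (setIntegral_nonneg hA fun x _ => abs_nonneg _)]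
    _ ≤ K * PhiG a b ψ (μ A) := hGf ▸ hle
    _ ≤ (K + 1) * PhiG a b ψ (μ A) := by gcongr; exact le_self_add

/-- If `g` generates a bounded linear functional `f ↦ ∫ f g dμ` on `G(ψ)`, then
`∫_z^∞ T(g,u) du ≤ K φ(G(ψ), T(g,z))` for all `z > 0`. -/
theorem dual_tail_condition {X : Type*} [MeasurableSpace X] (μ : Measure X)
    [SigmaFinite μ] (a b : ℝ) (ha : 1 ≤ a) (hab : a < b)
    (ψ : ℝ → ℝ) (hψ : ∀ p ∈ Set.Ioo a b, 0 < ψ p)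
    (g : X → ℝ) (hg : Measurable g)
    (hbound : ∃ K : ENNReal, K < ⊤ ∧ ∀ f : X → ℝ, Measurable f →
      GNorm μ a b ψ f < ⊤ → Integrable (fun x => f x * g x) μ ∧
      ENNReal.ofReal |∫ x, f x * g x ∂μ| ≤ K * GNorm μ a b ψ f) :
    ∃ K : ENNReal, K < ⊤ ∧ ∀ z : ℝ, 0 < z →
      (∫⁻ u in Set.Ioi z, μ {x | u < |g x|}) ≤
        K * PhiG a b ψ (μ {x | z < |g x|}) :=
  dual_tail_condition_general μ a b ha ψ g hg hbound
end

section
/- Let f be measurable with tail function satisfying T(f,u) ≤ C₁|log u|^γ·u^{-a} for 0 < u ≤ 1/2 and T(f,u) ≤ C₂(log u)^τ·u^{-b} for u ≥ 2, where 1 ≤ a < b < ∞ and γ,τ ≥ 0. Then f ∈ G(a,b; γ+1, τ+1), i.e., ‖f‖_{L^p} ≤ C·(p-a)^{-(γ+1)} as p → a+ and ‖f‖_{L^p} ≤ C·(b-p)^{-(τ+1)} as p → b−. -/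
/-!
By the layer-cake formula `‖f‖_p^p = p ∫₀^∞ t^(p-1) T(f,t) dt`; split the integral at `1/2` and `2`.
On `(0, 1/2]`, half of the gap `p - a` is spent on the logarithm,
`|log t|^γ ≤ (2γ/(p-a))^γ t^(-(p-a)/2)`, and the remaining `∫₀^{1/2} t^((p-a)/2 - 1) dt ≤ 2/(p-a)`
gives the bound `(p-a)^(-(γ+1))`; symmetrically `(2, ∞)` gives `(b-p)^(-(τ+1))`, and the middle
piece is bounded uniformly in `p`. Since `p ≥ 1`, a `p`-th root is at most the maximum with `1`.
-/

open MeasureTheory Set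
open scoped ENNReal

lemma Real.log_rpow_le_mul_rpow {y γ ε : ℝ} (hy : 1 ≤ y) (hγ : 0 ≤ γ) (hε : 0 < ε) :
    Real.log y ^ γ ≤ (γ / ε) ^ γ * y ^ ε := by
  have hy0 : 0 < y := one_pos.trans_le hy
  rcases hγ.eq_or_lt with rfl | hγ
  · simpa using Real.one_le_rpow hy hε.le
  -- `log y ≤ y ^ δ / δ` with `δ = ε / γ`, raised to the power `γ`
  have hlog : Real.log y ≤ γ / ε * y ^ (ε / γ) := by
    refine (Real.log_le_rpow_div hy0.le (div_pos hε hγ)).trans_eq ?_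
    field_simp
  calc Real.log y ^ γ ≤ (γ / ε * y ^ (ε / γ)) ^ γ :=
        Real.rpow_le_rpow (Real.log_nonneg hy) hlog hγ.le
    _ = (γ / ε) ^ γ * y ^ ε := by
        rw [Real.mul_rpow (by positivity) (by positivity), ← Real.rpow_mul hy0.le,
          div_mul_cancel₀ _ hγ.ne']

lemma Real.abs_log_rpow_le_mul_rpow_neg {t γ ε : ℝ} (ht0 : 0 < t) (ht1 : t ≤ 1) (hγ : 0 ≤ γ)
    (hε : 0 < ε) : |Real.log t| ^ γ ≤ (γ / ε) ^ γ * t ^ (-ε) := by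
  have h := Real.log_rpow_le_mul_rpow (one_le_inv_iff₀.mpr ⟨ht0, ht1⟩) hγ hε
  rwa [Real.log_inv, Real.inv_rpow ht0.le, ← Real.rpow_neg ht0.le,
    ← abs_of_nonpos (Real.log_nonpos ht0.le ht1)] at h

lemma lintegral_Ioc_zero_rpow_sub_one_le {c s : ℝ} (hc0 : 0 ≤ c) (hc1 : c ≤ 1) (hs : 0 < s) :
    ∫⁻ t in Ioc 0 c, ENNReal.ofReal (t ^ (s - 1)) ≤ ENNReal.ofReal (1 / s) := by
  have hint : IntegrableOn (fun t : ℝ => t ^ (s - 1)) (Ioc 0 c) :=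
    (intervalIntegrable_iff_integrableOn_Ioc_of_le hc0).1
      (intervalIntegral.intervalIntegrable_rpow' (by linarith))
  rw [← ofReal_integral_eq_lintegral_ofReal hint
    ((ae_restrict_mem measurableSet_Ioc).mono fun t ht => Real.rpow_nonneg ht.1.le _),
    ← intervalIntegral.integral_of_le hc0, integral_rpow (Or.inl (by linarith)),
    sub_add_cancel, Real.zero_rpow hs.ne', sub_zero]
  gcongr
  exact Real.rpow_le_one hc0 hc1 hs.le

lemma lintegral_Ioi_rpow_neg_sub_one_le {c s : ℝ} (hc : 1 ≤ c) (hs : 0 < s) :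
    ∫⁻ t in Ioi c, ENNReal.ofReal (t ^ (-s - 1)) ≤ ENNReal.ofReal (1 / s) := by
  have hc0 : 0 < c := one_pos.trans_le hc
  rw [← ofReal_integral_eq_lintegral_ofReal (integrableOn_Ioi_rpow_of_lt (by linarith) hc0)
    ((ae_restrict_mem measurableSet_Ioi).mono fun t ht => Real.rpow_nonneg (hc0.trans ht).le _),
    integral_Ioi_rpow_of_lt (by linarith) hc0, sub_add_cancel, neg_div, div_neg, neg_neg]
  gcongr
  exact Real.rpow_le_one_of_one_le_of_nonpos hc (by linarith)

lemma rpow_div_half_mul_inv_half {γ s : ℝ} (hγ : 0 ≤ γ) (hs : 0 < s) :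
    (γ / (s / 2)) ^ γ * (1 / (s / 2)) = 2 * (2 * γ) ^ γ * s ^ (-(γ + 1)) := by
  rw [div_div_eq_mul_div, mul_comm γ, Real.div_rpow (by positivity) hs.le,
    Real.rpow_neg hs.le, Real.rpow_add hs, Real.rpow_one]
  have := Real.rpow_pos_of_pos hs γ
  field_simp

lemma one_le_rpow_mul_rpow_neg {s S k : ℝ} (hs : 0 < s) (hsS : s ≤ S) (hk : 0 ≤ k) :
    1 ≤ S ^ k * s ^ (-k) := by
  rw [Real.rpow_neg hs.le, ← div_eq_mul_inv, one_le_div (Real.rpow_pos_of_pos hs k)]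
  exact Real.rpow_le_rpow hs.le hsS hk

lemma ENNReal.rpow_le_max_one {x : ℝ≥0∞} {z : ℝ} (hz0 : 0 ≤ z) (hz1 : z ≤ 1) :
    x ^ z ≤ max 1 x := by
  rcases le_total x 1 with hx | hx
  · exact (ENNReal.rpow_le_one hx hz0).trans (le_max_left _ _)
  · calc x ^ z ≤ x ^ (1 : ℝ) := ENNReal.rpow_le_rpow_of_exponent_le hx hz1
      _ ≤ max 1 x := by rw [ENNReal.rpow_one]; exact le_max_right _ _

lemma setLIntegral_Ioi_eq_Ioc_add_Ioi {g : ℝ → ℝ≥0∞} {c d : ℝ} (hcd : c ≤ d) :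
    ∫⁻ t in Ioi c, g t = (∫⁻ t in Ioc c d, g t) + ∫⁻ t in Ioi d, g t := by
  rw [← Ioc_union_Ioi_eq_Ioi hcd, lintegral_union measurableSet_Ioi Ioc_disjoint_Ioi_same]

section TailIntegrals

variable {T : ℝ → ℝ≥0∞} {C p : ℝ}

lemma setLIntegral_Ioc_mul_rpow_le_of_tail_le {c a γ : ℝ} (hc0 : 0 ≤ c) (hc1 : c ≤ 1)
    (hC : 0 ≤ C) (hγ : 0 ≤ γ) (hap : a < p)
    (hT : ∀ t, 0 < t → t ≤ c → T t ≤ ENNReal.ofReal (C * |Real.log t| ^ γ * t ^ (-a))) :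
    ∫⁻ t in Ioc 0 c, T t * ENNReal.ofReal (t ^ (p - 1)) ≤
      ENNReal.ofReal (2 * C * (2 * γ) ^ γ * (p - a) ^ (-(γ + 1))) := by
  set ε := (p - a) / 2 with hε_def
  have hε : 0 < ε := by linarith
  set A := C * (γ / ε) ^ γ
  have hpt : ∀ t ∈ Ioc 0 c, T t * ENNReal.ofReal (t ^ (p - 1)) ≤
      ENNReal.ofReal (A * t ^ (ε - 1)) := by
    rintro t ⟨ht0, htc⟩
    refine (mul_le_mul_left (hT t ht0 htc) _).trans ?_
    rw [← ENNReal.ofReal_mul (by positivity)]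
    refine ENNReal.ofReal_le_ofReal ?_
    calc C * |Real.log t| ^ γ * t ^ (-a) * t ^ (p - 1)
        ≤ C * ((γ / ε) ^ γ * t ^ (-ε)) * t ^ (-a) * t ^ (p - 1) := by
          gcongr
          exact Real.abs_log_rpow_le_mul_rpow_neg ht0 (htc.trans hc1) hγ hε
      _ = A * t ^ (ε - 1) := by
          rw [mul_assoc C, mul_assoc, mul_assoc, mul_assoc, ← Real.rpow_add ht0,
            ← Real.rpow_add ht0, show -ε + (-a + (p - 1)) = ε - 1 by linarith,
            ← mul_assoc]
  calc ∫⁻ t in Ioc 0 c, T t * ENNReal.ofReal (t ^ (p - 1))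
      ≤ ∫⁻ t in Ioc 0 c, ENNReal.ofReal A * ENNReal.ofReal (t ^ (ε - 1)) := by
        refine setLIntegral_mono' measurableSet_Ioc fun t ht => ?_
        rw [← ENNReal.ofReal_mul (by positivity)]
        exact hpt t ht
    _ = ENNReal.ofReal A * ∫⁻ t in Ioc 0 c, ENNReal.ofReal (t ^ (ε - 1)) :=
        lintegral_const_mul' _ _ ENNReal.ofReal_ne_top
    _ ≤ ENNReal.ofReal A * ENNReal.ofReal (1 / ε) :=
        mul_le_mul_right (lintegral_Ioc_zero_rpow_sub_one_le hc0 hc1 hε) _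
    _ = ENNReal.ofReal (2 * C * (2 * γ) ^ γ * (p - a) ^ (-(γ + 1))) := by
        rw [← ENNReal.ofReal_mul (by positivity), mul_assoc,
          rpow_div_half_mul_inv_half hγ (by linarith)]
        ring_nf

lemma setLIntegral_Ioi_mul_rpow_le_of_tail_le {c b τ : ℝ} (hc : 1 ≤ c) (hC : 0 ≤ C) (hτ : 0 ≤ τ)
    (hpb : p < b)
    (hT : ∀ t, c ≤ t → T t ≤ ENNReal.ofReal (C * Real.log t ^ τ * t ^ (-b))) :
    ∫⁻ t in Ioi c, T t * ENNReal.ofReal (t ^ (p - 1)) ≤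
      ENNReal.ofReal (2 * C * (2 * τ) ^ τ * (b - p) ^ (-(τ + 1))) := by
  set ε := (b - p) / 2 with hε_def
  have hε : 0 < ε := by linarith
  set B := C * (τ / ε) ^ τ
  have hpt : ∀ t ∈ Ioi c, T t * ENNReal.ofReal (t ^ (p - 1)) ≤
      ENNReal.ofReal (B * t ^ (-ε - 1)) := by
    intro t (hct : c < t)
    have ht0 : 0 < t := by linarith
    have hlog : 0 ≤ Real.log t := Real.log_nonneg (by linarith)
    refine (mul_le_mul_left (hT t hct.le) _).trans ?_
    rw [← ENNReal.ofReal_mul (by positivity)]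
    refine ENNReal.ofReal_le_ofReal ?_
    calc C * Real.log t ^ τ * t ^ (-b) * t ^ (p - 1)
        ≤ C * ((τ / ε) ^ τ * t ^ ε) * t ^ (-b) * t ^ (p - 1) := by
          gcongr
          exact Real.log_rpow_le_mul_rpow (by linarith) hτ hε
      _ = B * t ^ (-ε - 1) := by
          rw [mul_assoc C, mul_assoc, mul_assoc, mul_assoc, ← Real.rpow_add ht0,
            ← Real.rpow_add ht0, show ε + (-b + (p - 1)) = -ε - 1 by linarith, ← mul_assoc]
  calc ∫⁻ t in Ioi c, T t * ENNReal.ofReal (t ^ (p - 1))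
      ≤ ∫⁻ t in Ioi c, ENNReal.ofReal B * ENNReal.ofReal (t ^ (-ε - 1)) := by
        refine setLIntegral_mono' measurableSet_Ioi fun t ht => ?_
        rw [← ENNReal.ofReal_mul (by positivity)]
        exact hpt t ht
    _ = ENNReal.ofReal B * ∫⁻ t in Ioi c, ENNReal.ofReal (t ^ (-ε - 1)) :=
        lintegral_const_mul' _ _ ENNReal.ofReal_ne_top
    _ ≤ ENNReal.ofReal B * ENNReal.ofReal (1 / ε) :=
        mul_le_mul_right (lintegral_Ioi_rpow_neg_sub_one_le hc hε) _
    _ = ENNReal.ofReal (2 * C * (2 * τ) ^ τ * (b - p) ^ (-(τ + 1))) := by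
        rw [← ENNReal.ofReal_mul (by positivity), mul_assoc,
          rpow_div_half_mul_inv_half hτ (by linarith)]
        ring_nf

lemma setLIntegral_Ioc_mul_rpow_le_of_antitone (hT : Antitone T) {c d q : ℝ} (hc : 0 ≤ c)
    (hd : 1 ≤ d) (hp : 1 ≤ p) (hpq : p - 1 ≤ q) :
    ∫⁻ t in Ioc c d, T t * ENNReal.ofReal (t ^ (p - 1)) ≤
      T c * ENNReal.ofReal (d ^ q * (d - c)) := by
  calc ∫⁻ t in Ioc c d, T t * ENNReal.ofReal (t ^ (p - 1))
      ≤ ∫⁻ _ in Ioc c d, T c * ENNReal.ofReal (d ^ q) := by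
        refine setLIntegral_mono' measurableSet_Ioc fun t ⟨hct, htd⟩ => ?_
        gcongr
        · exact hT hct.le
        · calc t ^ (p - 1) ≤ d ^ (p - 1) := by gcongr; linarith
            _ ≤ d ^ q := Real.rpow_le_rpow_of_exponent_le hd hpq
    _ = T c * ENNReal.ofReal (d ^ q * (d - c)) := by
        rw [setLIntegral_const, Real.volume_Ioc, mul_assoc,
          ENNReal.ofReal_mul (by positivity)]

end TailIntegrals

lemma lintegral_enorm_rpow_eq_ofReal_mul_setLIntegral_meas_lt {X : Type*} [MeasurableSpace X]
    {μ : Measure X} {f : X → ℝ} (hf : AEMeasurable f μ) {p : ℝ} (hp : 0 < p) :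
    ∫⁻ x, ‖f x‖ₑ ^ p ∂μ =
      ENNReal.ofReal p * ∫⁻ t in Ioi 0, μ {x | t < |f x|} * ENNReal.ofReal (t ^ (p - 1)) := by
  simp_rw [Real.enorm_eq_ofReal_abs, ENNReal.ofReal_rpow_of_nonneg (abs_nonneg _) hp.le]
  exact lintegral_rpow_eq_lintegral_meas_lt_mul μ (ae_of_all _ fun x => abs_nonneg (f x)) hf.abs hp

lemma eLpNorm_ofReal_le_max_one_of_lintegral_le {X ε : Type*} [MeasurableSpace X] [ENorm ε]
    {μ : Measure X} {f : X → ε} {p S : ℝ} (hp : 1 ≤ p)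
    (h : ∫⁻ x, ‖f x‖ₑ ^ p ∂μ ≤ ENNReal.ofReal S) :
    eLpNorm f (ENNReal.ofReal p) μ ≤ ENNReal.ofReal (max 1 S) := by
  have hp0 : 0 < p := one_pos.trans_le hp
  rw [eLpNorm_eq_lintegral_rpow_enorm_toReal (by simpa) ENNReal.ofReal_ne_top,
    ENNReal.toReal_ofReal hp0.le, ENNReal.ofReal_max, ENNReal.ofReal_one]
  calc (∫⁻ x, ‖f x‖ₑ ^ p ∂μ) ^ (1 / p) ≤ max 1 (∫⁻ x, ‖f x‖ₑ ^ p ∂μ) :=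
        ENNReal.rpow_le_max_one (by positivity) ((div_le_one hp0).2 hp)
    _ ≤ max 1 (ENNReal.ofReal S) := max_le_max le_rfl h

lemma exists_setLIntegral_Ioi_mul_rpow_le_mul_max {T : ℝ → ℝ≥0∞} (hT : Antitone T)
    {a b γ τ C₁ C₂ : ℝ} (ha : 1 ≤ a) (hab : a < b) (hγ : 0 ≤ γ) (hτ : 0 ≤ τ) (hC₁ : 0 ≤ C₁)
    (hC₂ : 0 ≤ C₂)
    (hT₀ : ∀ t, 0 < t → t ≤ 1 / 2 → T t ≤ ENNReal.ofReal (C₁ * |Real.log t| ^ γ * t ^ (-a)))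
    (hT₁ : ∀ t, 2 ≤ t → T t ≤ ENNReal.ofReal (C₂ * Real.log t ^ τ * t ^ (-b))) :
    ∃ K, 0 ≤ K ∧ ∀ p ∈ Ioo a b, ∫⁻ t in Ioi 0, T t * ENNReal.ofReal (t ^ (p - 1)) ≤
      ENNReal.ofReal (K * max ((p - a) ^ (-(γ + 1))) ((b - p) ^ (-(τ + 1)))) := by
  set K₁ := 2 * C₁ * (2 * γ) ^ γ
  set K₂ := 2 * C₂ * (2 * τ) ^ τ
  set M := C₁ * |Real.log (1 / 2)| ^ γ * (1 / 2 : ℝ) ^ (-a) * (2 ^ b * (2 - 1 / 2))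
  refine ⟨K₁ + M * (b - a) ^ (γ + 1) + K₂, by positivity, ?_⟩
  rintro p ⟨hap, hpb⟩
  set X := (p - a) ^ (-(γ + 1))
  set Y := (b - p) ^ (-(τ + 1))
  have hX : 0 ≤ X := by have := hap.le; positivity
  have hY : 0 ≤ Y := by have := hpb.le; positivity
  have hmiddle : ∫⁻ t in Ioc (1 / 2) 2, T t * ENNReal.ofReal (t ^ (p - 1)) ≤ ENNReal.ofReal M :=
    calc _ ≤ T (1 / 2) * ENNReal.ofReal (2 ^ b * (2 - 1 / 2)) :=
          setLIntegral_Ioc_mul_rpow_le_of_antitone hT (by norm_num) (by norm_num)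
            (by linarith) (by linarith)
      _ ≤ ENNReal.ofReal (C₁ * |Real.log (1 / 2)| ^ γ * (1 / 2 : ℝ) ^ (-a)) *
            ENNReal.ofReal (2 ^ b * (2 - 1 / 2)) :=
          mul_le_mul_left (hT₀ _ (by norm_num) le_rfl) _
      _ = ENNReal.ofReal M := (ENNReal.ofReal_mul (by positivity)).symm
  have hM : M ≤ M * (b - a) ^ (γ + 1) * max X Y := by
    rw [mul_assoc]
    refine le_mul_of_one_le_right (by positivity) ?_
    exact (one_le_rpow_mul_rpow_neg (by linarith) (by linarith) (by linarith)).trans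
      (mul_le_mul_of_nonneg_left (le_max_left X Y) (by positivity))
  calc ∫⁻ t in Ioi 0, T t * ENNReal.ofReal (t ^ (p - 1))
      = (∫⁻ t in Ioc 0 (1 / 2), T t * ENNReal.ofReal (t ^ (p - 1))) +
          (∫⁻ t in Ioc (1 / 2) 2, T t * ENNReal.ofReal (t ^ (p - 1))) +
          ∫⁻ t in Ioi 2, T t * ENNReal.ofReal (t ^ (p - 1)) := by
        rw [setLIntegral_Ioi_eq_Ioc_add_Ioi (by norm_num : (0 : ℝ) ≤ 1 / 2),
          setLIntegral_Ioi_eq_Ioc_add_Ioi (by norm_num : (1 / 2 : ℝ) ≤ 2), add_assoc]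
    _ ≤ ENNReal.ofReal (K₁ * X) + ENNReal.ofReal M + ENNReal.ofReal (K₂ * Y) :=
        add_le_add (add_le_add
          (setLIntegral_Ioc_mul_rpow_le_of_tail_le (by norm_num) (by norm_num) hC₁ hγ hap hT₀)
          hmiddle) (setLIntegral_Ioi_mul_rpow_le_of_tail_le (by norm_num) hC₂ hτ hpb hT₁)
    _ = ENNReal.ofReal (K₁ * X + M + K₂ * Y) := by
        rw [ENNReal.ofReal_add (by positivity) (by positivity),
          ENNReal.ofReal_add (by positivity) (by positivity)]
    _ ≤ ENNReal.ofReal ((K₁ + M * (b - a) ^ (γ + 1) + K₂) * max X Y) := by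
        refine ENNReal.ofReal_le_ofReal ?_
        have := mul_le_mul_of_nonneg_left (le_max_left X Y) (by positivity : 0 ≤ K₁)
        have := mul_le_mul_of_nonneg_left (le_max_right X Y) (by positivity : 0 ≤ K₂)
        nlinarith

/-- Tail bounds `T(f,u) ≤ C₁ |log u|^γ u^{-a}` near `0` and
`T(f,u) ≤ C₂ (log u)^τ u^{-b}` near `∞` imply `f ∈ G(a,b; γ+1, τ+1)`. -/
theorem tail_to_moment {X : Type*} [MeasurableSpace X] (μ : Measure X)
    (a b γ τ : ℝ) (ha : 1 ≤ a) (hab : a < b) (hγ : 0 ≤ γ) (hτ : 0 ≤ τ)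
    (C₁ C₂ : ℝ) (hC₁ : 0 < C₁) (hC₂ : 0 < C₂)
    (f : X → ℝ) (hf : Measurable f)
    (htail₀ : ∀ u : ℝ, 0 < u → u ≤ 1 / 2 →
      μ {x | u < |f x|} ≤ ENNReal.ofReal (C₁ * |Real.log u| ^ γ * u ^ (-a)))
    (htailInf : ∀ u : ℝ, 2 ≤ u →
      μ {x | u < |f x|} ≤ ENNReal.ofReal (C₂ * (Real.log u) ^ τ * u ^ (-b))) :
    ∃ C : ℝ, 0 < C ∧ ∀ p ∈ Set.Ioo a b,
      eLpNorm f (ENNReal.ofReal p) μ ≤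
        ENNReal.ofReal (C * max ((p - a) ^ (-(γ + 1))) ((b - p) ^ (-(τ + 1)))) := by
  have hT : Antitone fun t => μ {x | t < |f x|} :=
    fun s t hst => measure_mono fun x (hx : t < |f x|) => hst.trans_lt hx
  obtain ⟨K, hK, hbound⟩ := exists_setLIntegral_Ioi_mul_rpow_le_mul_max hT ha hab hγ hτ hC₁.le
    hC₂.le htail₀ htailInf
  have hb : 0 < b := by linarith
  refine ⟨(b - a) ^ (γ + 1) + b * K, by have := sub_pos.2 hab; positivity, ?_⟩
  rintro p ⟨hap, hpb⟩
  set R := max ((p - a) ^ (-(γ + 1))) ((b - p) ^ (-(τ + 1)))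
  have hp : 0 < p := by linarith
  have hR : 1 ≤ (b - a) ^ (γ + 1) * R :=
    (one_le_rpow_mul_rpow_neg (by linarith) (by linarith) (by linarith)).trans
      (mul_le_mul_of_nonneg_left (le_max_left _ _) (by positivity))
  have hR0 : 0 ≤ R := (le_max_left _ _).trans' (by have := hap.le; positivity)
  have hmoment : ∫⁻ x, ‖f x‖ₑ ^ p ∂μ ≤ ENNReal.ofReal (p * (K * R)) := by
    rw [lintegral_enorm_rpow_eq_ofReal_mul_setLIntegral_meas_lt hf.aemeasurable hp,
      ENNReal.ofReal_mul hp.le]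
    exact mul_le_mul_right (hbound p ⟨hap, hpb⟩) _
  refine (eLpNorm_ofReal_le_max_one_of_lintegral_le (by linarith) hmoment).trans
    (ENNReal.ofReal_le_ofReal (max_le ?_ ?_))
  · nlinarith [mul_nonneg (mul_nonneg hb.le hK) hR0]
  · nlinarith [mul_le_mul_of_nonneg_right hpb.le (mul_nonneg hK hR0)]
end

section
/- Suppose T(f,u) ≤ C₁|log u|^γ u^{-a} for u ∈ (0,1/2) and T(f,u) ≤ C₂·exp(−C₃·u^{1/β}) for u ≥ 1/2, with a ≥ 1, γ ≥ 0, β > 0. Then for all p > a, ‖f‖_{L^p} ≤ C·(p−a)^{−(γ+1)} for p near a and ‖f‖_{L^p} ≤ C·p^β for large p; that is, f ∈ G(a,∞; γ+1, −β). -/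
/-!
By the layer-cake formula, `‖f‖_p^p = p ∫₀^∞ t^(p-1) T(f,t) dt`; split the integral at
`t = 1/2`. Everything rests on `x^m e^(-cx) ≤ (m/(ec))^m`. Near `0`, write
`t^(p-1-a) = t^ε t^(ε-1)` with `ε = (p-a)/2`: the factor `t^ε` absorbs `|log t|^γ` at the price
`ε^(-γ)`, and `t^(ε-1)` integrates to at most `1/ε`, which gives `(p-a)^(-(γ+1))`. Near `∞`,
one half of the decay `exp(-C₃ t^(1/β))` absorbs `t^(p-1)` at the price `(Kp)^(βp)` and the
other half absorbs `t²`, leaving the integrable `t^(-2)`. Taking `p`-th roots, `p^(1/p) ≤ e`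
and the constants disappear.
-/

open MeasureTheory Set Real
open scoped ENNReal

theorem rpow_mul_exp_neg_mul_le {m c x : ℝ} (hm : 0 ≤ m) (hc : 0 < c) (hx : 0 ≤ x) :
    x ^ m * exp (-(c * x)) ≤ (m / (exp 1 * c)) ^ m := by
  rcases hm.eq_or_lt with rfl | hm
  · simpa using mul_nonneg hc.le hx
  rcases hx.eq_or_lt with rfl | hx
  · simpa [zero_rpow hm.ne'] using rpow_nonneg (div_nonneg hm.le (by positivity)) m
  have hlog : log (c * x / m) ≤ c * x / m - 1 := log_le_sub_one_of_pos (by positivity)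
  rw [log_div (by positivity) hm.ne', log_mul hc.ne' hx.ne'] at hlog
  rw [rpow_def_of_pos hx, rpow_def_of_pos (by positivity), ← exp_add, exp_le_exp,
    log_div hm.ne' (by positivity), log_mul (exp_pos 1).ne' hc.ne', log_exp]
  have hcx : m * (c * x / m) = c * x := mul_div_cancel₀ _ hm.ne'
  linarith [mul_le_mul_of_nonneg_left hlog hm.le]

theorem rpow_mul_exp_neg_mul_rpow_one_div_le {β m c t : ℝ} (hβ : 0 < β) (hm : 0 ≤ m)
    (hc : 0 < c) (ht : 0 ≤ t) :
    t ^ m * exp (-(c * t ^ (1 / β))) ≤ (β * m / (exp 1 * c)) ^ (β * m) := by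
  have := rpow_mul_exp_neg_mul_le (mul_nonneg hβ.le hm) hc (rpow_nonneg ht (1 / β))
  rw [← rpow_mul ht, one_div, inv_mul_cancel_left₀ hβ.ne'] at this
  rwa [one_div]

theorem abs_log_rpow_mul_rpow_le {γ ε t : ℝ} (hγ : 0 ≤ γ) (hε : 0 < ε) (ht₀ : 0 < t)
    (ht₁ : t ≤ 1) : |log t| ^ γ * t ^ ε ≤ (γ / (exp 1 * ε)) ^ γ := by
  have h := rpow_mul_exp_neg_mul_le hγ hε (neg_nonneg.2 (log_nonpos ht₀.le ht₁))
  rwa [mul_neg, neg_neg, mul_comm ε, ← rpow_def_of_pos ht₀,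
    ← abs_of_nonpos (log_nonpos ht₀.le ht₁)] at h

theorem rpow_sub_one_mul_exp_neg_mul_rpow_le {β c p t : ℝ} (hβ : 0 < β) (hc : 0 < c)
    (hp : 1 ≤ p) (ht : 0 < t) :
    t ^ (p - 1) * exp (-c * t ^ (1 / β)) ≤
      (4 * β / (exp 1 * c)) ^ (2 * β) * (max 1 (2 * β / (exp 1 * c)) * p) ^ (β * p) *
        t ^ (-2 : ℝ) := by
  set v := t ^ (1 / β)
  set K := max 1 (2 * β / (exp 1 * c))
  have hKp : 1 ≤ K * p := one_le_mul_of_one_le_of_one_le (le_max_left _ _) hp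
  have hmoment : t ^ (p - 1) * exp (-(c / 2 * v)) ≤ (K * p) ^ (β * p) := calc
    _ ≤ (β * (p - 1) / (exp 1 * (c / 2))) ^ (β * (p - 1)) :=
      rpow_mul_exp_neg_mul_rpow_one_div_le hβ (by linarith) (by positivity) ht.le
    _ ≤ (K * p) ^ (β * (p - 1)) := by
      gcongr
      calc β * (p - 1) / (exp 1 * (c / 2)) = 2 * β / (exp 1 * c) * (p - 1) := by
            field_simp
        _ ≤ K * p := mul_le_mul (le_max_right _ _) (by linarith) (by linarith) (by positivity)
    _ ≤ (K * p) ^ (β * p) := rpow_le_rpow_of_exponent_le hKp (by nlinarith)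
  have hdecay : t ^ (2 : ℝ) * exp (-(c / 2 * v)) ≤ (4 * β / (exp 1 * c)) ^ (2 * β) := by
    convert rpow_mul_exp_neg_mul_rpow_one_div_le hβ zero_le_two (half_pos hc) ht.le using 2
    · field_simp; norm_num
    · ring
  calc t ^ (p - 1) * exp (-c * v)
      = (t ^ (2 : ℝ) * exp (-(c / 2 * v))) * (t ^ (p - 1) * exp (-(c / 2 * v))) *
          t ^ (-2 : ℝ) := by
        have hsplit : exp (-c * v) = exp (-(c / 2 * v)) * exp (-(c / 2 * v)) := by
          rw [← exp_add]; ring_nf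
        have hone : t ^ (2 : ℝ) * t ^ (-2 : ℝ) = 1 := by rw [← rpow_add ht]; norm_num
        rw [hsplit]
        linear_combination (-(t ^ (p - 1) * exp (-(c / 2 * v)) * exp (-(c / 2 * v)))) * hone
    _ ≤ _ := by gcongr

theorem lintegral_Ioo_zero_rpow_sub_one {ε b : ℝ} (hε : 0 < ε) (hb : 0 ≤ b) :
    ∫⁻ t in Ioo 0 b, ENNReal.ofReal (t ^ (ε - 1)) = ENNReal.ofReal (b ^ ε / ε) := by
  have hint : IntegrableOn (fun t : ℝ => t ^ (ε - 1)) (Ioo 0 b) := by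
    rcases hb.eq_or_lt with rfl | hb
    · simp
    exact (intervalIntegral.integrableOn_Ioo_rpow_iff hb).2 (by linarith)
  rw [← ofReal_integral_eq_lintegral_ofReal hint
      (ae_restrict_of_forall_mem measurableSet_Ioo fun t ht => rpow_nonneg ht.1.le _),
    ← integral_Ioc_eq_integral_Ioo, ← intervalIntegral.integral_of_le hb,
    integral_rpow (Or.inl (by linarith)), sub_add_cancel, zero_rpow hε.ne', sub_zero]

theorem lintegral_Ici_rpow_neg_two {b : ℝ} (hb : 0 < b) :
    ∫⁻ t in Ici b, ENNReal.ofReal (t ^ (-2 : ℝ)) = ENNReal.ofReal b⁻¹ := by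
  rw [← setLIntegral_congr Ioi_ae_eq_Ici,
    ← ofReal_integral_eq_lintegral_ofReal (integrableOn_Ioi_rpow_of_lt (by norm_num) hb)
      (ae_restrict_of_forall_mem measurableSet_Ioi fun t ht => rpow_nonneg (hb.trans ht).le _),
    integral_Ioi_rpow_of_lt (by norm_num) hb]
  norm_num [rpow_neg_one]

theorem lintegral_Ioo_mul_rpow_le_of_le_abs_log_rpow {T : ℝ → ℝ≥0∞} {C γ a p b : ℝ}
    (hC : 0 ≤ C) (hγ : 0 ≤ γ) (hap : a < p) (hb₀ : 0 ≤ b) (hb₁ : b ≤ 1)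
    (hT : ∀ t ∈ Ioo 0 b, T t ≤ ENNReal.ofReal (C * |log t| ^ γ * t ^ (-a))) :
    ∫⁻ t in Ioo 0 b, T t * ENNReal.ofReal (t ^ (p - 1)) ≤
      ENNReal.ofReal (C * (2 * γ / exp 1) ^ γ * 2 * (p - a) ^ (-(γ + 1))) := by
  set ε := (p - a) / 2 with hε_def
  have hε : 0 < ε := by rw [hε_def]; linarith
  set K := C * (γ / (exp 1 * ε)) ^ γ with hK_def
  have hK : 0 ≤ K := by positivity
  have hpointwise : ∀ t ∈ Ioo 0 b,
      T t * ENNReal.ofReal (t ^ (p - 1)) ≤ ENNReal.ofReal K * ENNReal.ofReal (t ^ (ε - 1)) := by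
    rintro t ⟨ht₀, htb⟩
    have hsplit : t ^ (-a) * t ^ (p - 1) = t ^ ε * t ^ (ε - 1) := by
      rw [← rpow_add ht₀, ← rpow_add ht₀, hε_def]; ring_nf
    calc T t * ENNReal.ofReal (t ^ (p - 1))
        ≤ ENNReal.ofReal (C * |log t| ^ γ * t ^ (-a)) * ENNReal.ofReal (t ^ (p - 1)) := by
          gcongr; exact hT t ⟨ht₀, htb⟩
      _ = ENNReal.ofReal (C * (|log t| ^ γ * t ^ ε) * t ^ (ε - 1)) := by
          rw [← ENNReal.ofReal_mul (by positivity)]; congr 1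
          rw [mul_assoc, hsplit]; ring
      _ ≤ ENNReal.ofReal (K * t ^ (ε - 1)) := by
          gcongr
          exact mul_le_mul_of_nonneg_left
            (abs_log_rpow_mul_rpow_le hγ hε ht₀ (htb.le.trans hb₁)) hC
      _ = _ := ENNReal.ofReal_mul hK
  calc ∫⁻ t in Ioo 0 b, T t * ENNReal.ofReal (t ^ (p - 1))
      ≤ ENNReal.ofReal K * ENNReal.ofReal (b ^ ε / ε) := by
        rw [← lintegral_Ioo_zero_rpow_sub_one hε hb₀,
          ← lintegral_const_mul' _ _ ENNReal.ofReal_ne_top]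
        exact setLIntegral_mono' measurableSet_Ioo hpointwise
    _ ≤ ENNReal.ofReal (K / ε) := by
        rw [← ENNReal.ofReal_mul hK, ← mul_div_assoc]
        gcongr
        exact mul_le_of_le_one_right hK (rpow_le_one hb₀ hb₁ hε.le)
    _ = _ := by
        have hpa : 0 < p - a := by linarith
        have hbase : γ / (exp 1 * ε) = 2 * γ / exp 1 * (p - a)⁻¹ := by
          rw [hε_def]; field_simp
        rw [rpow_neg hpa.le, rpow_add_one hpa.ne', mul_inv, ← inv_rpow hpa.le, hK_def, hbase,
          mul_rpow (by positivity) (by positivity), hε_def]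
        congr 1
        field_simp

theorem exists_lintegral_Ici_mul_rpow_le_of_le_exp_neg {T : ℝ → ℝ≥0∞} {C c β b : ℝ}
    (hC : 0 ≤ C) (hc : 0 < c) (hβ : 0 < β) (hb : 0 < b)
    (hT : ∀ t ∈ Ici b, T t ≤ ENNReal.ofReal (C * exp (-c * t ^ (1 / β)))) :
    ∃ B K : ℝ, 0 ≤ B ∧ 1 ≤ K ∧ ∀ p, 1 ≤ p →
      ∫⁻ t in Ici b, T t * ENNReal.ofReal (t ^ (p - 1)) ≤
        ENNReal.ofReal (B * (K * p) ^ (β * p)) := by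
  set D := (4 * β / (exp 1 * c)) ^ (2 * β)
  set K := max 1 (2 * β / (exp 1 * c))
  refine ⟨C * D * b⁻¹, K, by positivity, le_max_left _ _, fun p hp => ?_⟩
  have hpointwise : ∀ t ∈ Ici b, T t * ENNReal.ofReal (t ^ (p - 1)) ≤
      ENNReal.ofReal (C * D * (K * p) ^ (β * p)) * ENNReal.ofReal (t ^ (-2 : ℝ)) := by
    intro t ht
    have ht₀ : 0 < t := hb.trans_le ht
    calc T t * ENNReal.ofReal (t ^ (p - 1))
        ≤ ENNReal.ofReal (C * (t ^ (p - 1) * exp (-c * t ^ (1 / β)))) := by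
          rw [mul_left_comm, ENNReal.ofReal_mul (by positivity), mul_comm]
          gcongr
          exact hT t ht
      _ ≤ ENNReal.ofReal (C * (D * (K * p) ^ (β * p) * t ^ (-2 : ℝ))) := by
          gcongr ENNReal.ofReal (C * ?_)
          exact rpow_sub_one_mul_exp_neg_mul_rpow_le hβ hc hp ht₀
      _ = _ := by rw [← ENNReal.ofReal_mul (by positivity)]; ring_nf
  calc ∫⁻ t in Ici b, T t * ENNReal.ofReal (t ^ (p - 1))
      ≤ ENNReal.ofReal (C * D * (K * p) ^ (β * p)) * ENNReal.ofReal b⁻¹ := by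
        rw [← lintegral_Ici_rpow_neg_two hb,
          ← lintegral_const_mul' _ _ ENNReal.ofReal_ne_top]
        exact setLIntegral_mono' measurableSet_Ici hpointwise
    _ = _ := by rw [← ENNReal.ofReal_mul (by positivity)]; ring_nf

theorem eLpNorm_le_ofReal_of_lintegral_meas_lt_le {X : Type*} [MeasurableSpace X]
    {μ : Measure X} {f : X → ℝ} (hf : AEMeasurable f μ) {p R : ℝ} (hp : 0 < p) (hR : 0 ≤ R)
    (h : ENNReal.ofReal p * ∫⁻ t in Ioi 0, μ {x | t < |f x|} * ENNReal.ofReal (t ^ (p - 1))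
      ≤ ENNReal.ofReal (R ^ p)) :
    eLpNorm f (ENNReal.ofReal p) μ ≤ ENNReal.ofReal R := by
  have hlayer : ∫⁻ x, ‖f x‖ₑ ^ p ∂μ = ENNReal.ofReal p *
      ∫⁻ t in Ioi 0, μ {x | t < |f x|} * ENNReal.ofReal (t ^ (p - 1)) := by
    simp_rw [Real.enorm_eq_ofReal_abs, ENNReal.ofReal_rpow_of_nonneg (abs_nonneg _) hp.le]
    exact lintegral_rpow_eq_lintegral_meas_lt_mul μ (ae_of_all μ fun x => abs_nonneg (f x))
      hf.abs hp
  rw [eLpNorm_eq_lintegral_rpow_enorm_toReal (by simpa using hp) ENNReal.ofReal_ne_top,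
    ENNReal.toReal_ofReal hp.le, hlayer, one_div, ENNReal.rpow_inv_le_iff hp,
    ENNReal.ofReal_rpow_of_nonneg hR hp.le]
  exact h

theorem add_mul_rpow_le_mul_rpow_max {p β x A B K : ℝ} (hp : 1 ≤ p) (hβ : 0 ≤ β)
    (hA : 0 ≤ A) (hB : 0 ≤ B) (hK : 1 ≤ K) :
    A * x + B * (K * p) ^ (β * p) ≤ (A + B) * (K ^ β * max x (p ^ β)) ^ p := by
  set M := max x (p ^ β)
  have hM : 1 ≤ M := (one_le_rpow hp hβ).trans (le_max_right _ _)
  have hMZ : M ≤ K ^ β * M := le_mul_of_one_le_left (by positivity) (one_le_rpow hK hβ)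
  have hx_le : x ≤ (K ^ β * M) ^ p :=
    (le_max_left _ _).trans (hMZ.trans (self_le_rpow_of_one_le (hM.trans hMZ) hp))
  have hKp : (K * p) ^ (β * p) ≤ (K ^ β * M) ^ p := by
    rw [rpow_mul (by positivity), mul_rpow (by positivity) (by positivity)]
    gcongr
    exact le_max_right _ _
  rw [add_mul]
  gcongr

theorem mul_add_mul_rpow_le_rpow_max {p β x A B K : ℝ} (hp : 1 ≤ p) (hβ : 0 ≤ β) (hA : 0 ≤ A)
    (hB : 0 ≤ B) (hK : 1 ≤ K) :
    p * (A * x + B * (K * p) ^ (β * p)) ≤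
      (exp 1 * max (A + B) 1 * K ^ β * max x (p ^ β)) ^ p := by
  set Z := K ^ β * max x (p ^ β)
  have hZ : 0 ≤ Z := by positivity
  have hAB : A + B ≤ max (A + B) 1 ^ p :=
    (le_max_left _ _).trans (self_le_rpow_of_one_le (le_max_right _ _) hp)
  have hpe : p ≤ exp 1 ^ p := by rw [exp_one_rpow]; linarith [add_one_le_exp p]
  calc p * (A * x + B * (K * p) ^ (β * p))
      ≤ p * ((A + B) * Z ^ p) := by gcongr; exact add_mul_rpow_le_mul_rpow_max hp hβ hA hB hK
    _ ≤ exp 1 ^ p * (max (A + B) 1 ^ p * Z ^ p) := by gcongr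
    _ = _ := by
      rw [mul_assoc (exp 1 * _), mul_rpow (by positivity) hZ,
        mul_rpow (exp_pos 1).le (by positivity : 0 ≤ max (A + B) 1), mul_assoc]

/-- Tail bounds `T(f,u) ≤ C₁ |log u|^γ u^{-a}` near `0` and
`T(f,u) ≤ C₂ exp(-C₃ u^{1/β})` near `∞` imply `f ∈ G(a,∞; γ+1, -β)`. -/
theorem tail_to_moment_exp {X : Type*} [MeasurableSpace X] (μ : Measure X)
    (a γ β : ℝ) (ha : 1 ≤ a) (hγ : 0 ≤ γ) (hβ : 0 < β)
    (C₁ C₂ C₃ : ℝ) (hC₁ : 0 < C₁) (hC₂ : 0 < C₂) (hC₃ : 0 < C₃)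
    (f : X → ℝ) (hf : Measurable f)
    (htail₀ : ∀ u : ℝ, 0 < u → u < 1 / 2 →
      μ {x | u < |f x|} ≤ ENNReal.ofReal (C₁ * |Real.log u| ^ γ * u ^ (-a)))
    (htailInf : ∀ u : ℝ, 1 / 2 ≤ u →
      μ {x | u < |f x|} ≤ ENNReal.ofReal (C₂ * Real.exp (-C₃ * u ^ (1 / β)))) :
    ∃ C : ℝ, 0 < C ∧ ∀ p : ℝ, a < p →
      eLpNorm f (ENNReal.ofReal p) μ ≤
        ENNReal.ofReal (C * max ((p - a) ^ (-(γ + 1))) (p ^ β)) := by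
  set A := C₁ * (2 * γ / exp 1) ^ γ * 2
  obtain ⟨B, K, hB, hK, hfar⟩ := exists_lintegral_Ici_mul_rpow_le_of_le_exp_neg hC₂.le hC₃ hβ
    one_half_pos fun t ht => htailInf t ht
  refine ⟨exp 1 * max (A + B) 1 * K ^ β, by positivity, fun p hp => ?_⟩
  have hp₁ : 1 ≤ p := ha.trans hp.le
  have hnear := lintegral_Ioo_mul_rpow_le_of_le_abs_log_rpow hC₁.le hγ hp one_half_pos.le
    one_half_lt_one.le fun t ht => htail₀ t ht.1 ht.2
  refine eLpNorm_le_ofReal_of_lintegral_meas_lt_le hf.aemeasurable (by linarith) (by positivity)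
    ?_
  rw [← Ioo_union_Ici_eq_Ioi one_half_pos]
  calc ENNReal.ofReal p * ∫⁻ t in Ioo 0 (1 / 2) ∪ Ici (1 / 2),
        μ {x | t < |f x|} * ENNReal.ofReal (t ^ (p - 1))
      ≤ ENNReal.ofReal p * (ENNReal.ofReal (A * (p - a) ^ (-(γ + 1))) +
          ENNReal.ofReal (B * (K * p) ^ (β * p))) := by
        gcongr
        exact (lintegral_union_le _ _ _).trans (add_le_add hnear (hfar p hp₁))
    _ = ENNReal.ofReal (p * (A * (p - a) ^ (-(γ + 1)) + B * (K * p) ^ (β * p))) := by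
        rw [← ENNReal.ofReal_add (by positivity) (by positivity),
          ← ENNReal.ofReal_mul (by positivity)]
    _ ≤ _ := by
        gcongr
        exact mul_add_mul_rpow_le_rpow_max hp₁ hβ.le (by positivity) hB hK
end

section
/- If the Fourier transform operator F satisfies the Hausdorff–Young inequality ‖F[f]‖_{L^{p/(p-1)}} ≤ C‖f‖_{L^p} for p ∈ (1,2], and ψ is positive continuous with (1,2] ⊂ supp ψ, then F is bounded from G(ψ) into G(ψ₁) where ψ₁(q) = ψ(q/(q-1)): ‖F[f]‖_{G(ψ₁)} ≤ C‖f‖_{G(ψ)}. -/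
open MeasureTheory Set

lemma Real.HolderConjugate.le_two_of_two_le {p q : ℝ} (h : p.HolderConjugate q) (hp : 2 ≤ p) :
    q ≤ 2 := by
  have hq_inv : 2⁻¹ ≤ q⁻¹ := by
    rw [← h.one_sub_inv]
    linarith [inv_anti₀ (zero_lt_two' ℝ) hp]
  exact (inv_le_inv₀ two_pos h.symm.pos).1 hq_inv

theorem fourier_GNorm_bounded_general (F : (ℝ → ℂ) → (ℝ → ℂ)) (C : ℝ)
    (ψ : ℝ → ℝ)
    (hHY : ∀ p ∈ Set.Ioc (1 : ℝ) 2, ∀ f : ℝ → ℂ,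
      eLpNorm (F f) (ENNReal.ofReal (p / (p - 1))) volume ≤
        ENNReal.ofReal C * eLpNorm f (ENNReal.ofReal p) volume) :
    ∀ f : ℝ → ℂ,
      (⨆ q : Set.Ici (2 : ℝ),
          eLpNorm (F f) (ENNReal.ofReal (q : ℝ)) volume /
            ENNReal.ofReal (ψ ((q : ℝ) / ((q : ℝ) - 1)))) ≤
        ENNReal.ofReal C *
          ⨆ p : Set.Ioc (1 : ℝ) 2,
            eLpNorm f (ENNReal.ofReal (p : ℝ)) volume / ENNReal.ofReal (ψ p) := by
  intro f
  rw [ENNReal.mul_iSup]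
  -- The weight of the `q`-term is `ψ p` for the dual exponent `p = q / (q - 1)`, so Hausdorff–Young
  -- at `p` bounds it by `C` times the `p`-term.
  refine iSup_mono' fun ⟨q, hq⟩ ↦ ?_
  have hconj : q.HolderConjugate (q / (q - 1)) :=
    .conjExponent (by linarith [mem_Ici.1 hq])
  have hp : q / (q - 1) ∈ Ioc (1 : ℝ) 2 := ⟨hconj.symm.lt, hconj.le_two_of_two_le hq⟩
  have hHY_p := hHY _ hp f
  rw [← hconj.symm.conjugate_eq] at hHY_p
  refine ⟨⟨_, hp⟩, ?_⟩
  rw [← mul_div_assoc]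
  exact ENNReal.div_le_div_right hHY_p _

/-- If the Fourier transform `F` satisfies the Hausdorff–Young inequality
`‖F f‖_{L^{p/(p-1)}} ≤ C ‖f‖_{L^p}` for `p ∈ (1,2]`, then `F` is bounded from
`G(ψ)` into `G(ψ₁)` with `ψ₁(q) = ψ(q/(q-1))`. -/
theorem fourier_GNorm_bounded (F : (ℝ → ℂ) → (ℝ → ℂ)) (C : ℝ) (hC : 0 < C)
    (ψ : ℝ → ℝ) (hψ : ∀ p ∈ Set.Ioc (1 : ℝ) 2, 0 < ψ p)
    (hHY : ∀ p ∈ Set.Ioc (1 : ℝ) 2, ∀ f : ℝ → ℂ,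
      eLpNorm (F f) (ENNReal.ofReal (p / (p - 1))) volume ≤
        ENNReal.ofReal C * eLpNorm f (ENNReal.ofReal p) volume) :
    ∀ f : ℝ → ℂ,
      (⨆ q : Set.Ici (2 : ℝ),
          eLpNorm (F f) (ENNReal.ofReal (q : ℝ)) volume /
            ENNReal.ofReal (ψ ((q : ℝ) / ((q : ℝ) - 1)))) ≤
        ENNReal.ofReal C *
          ⨆ p : Set.Ioc (1 : ℝ) 2,
            eLpNorm f (ENNReal.ofReal (p : ℝ)) volume / ENNReal.ofReal (ψ p) :=
  fourier_GNorm_bounded_general F C ψ hHY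
end
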